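/- Let P ≠ Q be distributions on [d] with supp(P) ⊆ supp(Q), and let cₙ = (d·log₂(n+1))/n + C/n for a constant C > 0. If Xⁿ are i.i.d. from Q, then the type II error of Hoeffding's test, βₙ = Pr[D(Q̂ₙ‖P) ≤ cₙ], satisfies liminf_{n→∞} -(1/n)·log₂ βₙ ≥ D(P‖Q). -/

import Mathlib

/-!
A sample `x` of length `n` with type `T = empDist x` has probability
`Qⁿ(x) = Tⁿ(x) · 2^{-n D(T‖Q)}`, and there are at most `(n+1)^d` types, so the acceptance
region has `Qⁿ`-probability at most `(n+1)^d · 2^{-n min D(T‖Q)}` (Sanov). On that region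
`D(T‖P) ≤ cₙ → 0`; the Hellinger bound `∑ (√Tᵢ - √Pᵢ)² ≤ ln 2 · D(T‖P)` then forces `T → P`
uniformly, and `D(T‖Q) = D(T‖P) + ∑ Tᵢ log₂(Pᵢ/Qᵢ) ≥ D(P‖Q) - ∑ |log₂(Pᵢ/Qᵢ)| · maxᵢ |Tᵢ - Pᵢ|`.
Since also `d log₂(n+1)/n → 0`, the error exponent is at least `D(P‖Q) - o(1)`.
-/

open MeasureTheory Filter Finset
open scoped ENNReal

/-- `p` is a probability distribution on `Fin d`. -/
def IsProbDist {d : ℕ} (p : Fin d → ℝ) : Prop :=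
  (∀ i, 0 ≤ p i) ∧ ∑ i, p i = 1

/-- Base-2 Kullback–Leibler divergence (real-valued version, meaningful when
`supp p ⊆ supp q`), with the convention `0 · log(0/q) = 0`. -/
noncomputable def klDivReal {d : ℕ} (p q : Fin d → ℝ) : ℝ :=
  ∑ i, if p i = 0 then 0 else p i * Real.logb 2 (p i / q i)

/-- Base-2 Kullback–Leibler divergence, `+∞` when `supp p ⊄ supp q`. -/
noncomputable def klDiv {d : ℕ} (p q : Fin d → ℝ) : EReal :=
  if ∀ i, q i = 0 → p i = 0 then ((klDivReal p q : ℝ) : EReal) else ⊤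

/-- Minimal nonzero entry of `p` (junk value `1` if there is none). -/
noncomputable def minPos {d : ℕ} (p : Fin d → ℝ) : ℝ :=
  if h : (Finset.univ.filter fun i => 0 < p i).Nonempty
  then (Finset.univ.filter fun i => 0 < p i).inf' h p else 1

/-- The continuity modulus `g(p, ε) = 2 log₂(1/p_min) ε + (2√2/ln 2) √ε`. -/
noncomputable def gCont {d : ℕ} (p : Fin d → ℝ) (ε : ℝ) : ℝ :=
  2 * Real.logb 2 (1 / minPos p) * ε + (2 * Real.sqrt 2 / Real.log 2) * Real.sqrt ε

/-- The discrete measure on `Fin d` with mass `p i` at `i`. -/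
noncomputable def discMeasure {d : ℕ} (p : Fin d → ℝ) : Measure (Fin d) :=
  Measure.count.withDensity fun i => ENNReal.ofReal (p i)

instance discMeasure.isFiniteMeasure {d : ℕ} (p : Fin d → ℝ) :
    IsFiniteMeasure (discMeasure p) := by
  constructor
  rw [discMeasure, withDensity_apply _ MeasurableSet.univ,
    MeasureTheory.setLIntegral_univ, MeasureTheory.lintegral_count, tsum_fintype]
  exact ENNReal.sum_lt_top.mpr fun i _ => ENNReal.ofReal_lt_top

/-- The law of `n` i.i.d. samples from `p`. -/
noncomputable def iidMeasure {d : ℕ} (p : Fin d → ℝ) (n : ℕ) :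
    Measure (Fin n → Fin d) :=
  Measure.pi fun _ => discMeasure p

/-- The empirical distribution of the sample `x`. -/
noncomputable def empDist {d n : ℕ} (x : Fin n → Fin d) : Fin d → ℝ :=
  fun i => ((Finset.univ.filter fun j => x j = i).card : ℝ) / n

/-- ℓ¹ distance between two vectors on `Fin d`. -/
noncomputable def l1Dist {d : ℕ} (p q : Fin d → ℝ) : ℝ :=
  ∑ i, |p i - q i|

open Real Topology

section KL

variable {d : ℕ} {T P Q : Fin d → ℝ}

lemma klDivReal_eq_sum (p q : Fin d → ℝ) :
    klDivReal p q = ∑ i, p i * logb 2 (p i / q i) :=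
  Finset.sum_congr rfl fun i _ => by split_ifs with h <;> simp [h]

lemma IsProbDist.le_one {p : Fin d → ℝ} (hp : IsProbDist p) (i : Fin d) : p i ≤ 1 :=
  hp.2 ▸ Finset.single_le_sum (fun j _ => hp.1 j) (mem_univ i)

lemma sq_sqrt_sub_sqrt_le_mul_log {t p : ℝ} (ht : 0 ≤ t) (hp : 0 < p) :
    (√t - √p) ^ 2 ≤ t * log (t / p) - t + p := by
  rcases ht.eq_or_lt with rfl | ht
  · simp [Real.sq_sqrt hp.le]
  -- `log (t/p) = 2 log √(t/p) ≥ 2 (1 - √(p/t))`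
  have hlog : 2 * (1 - √p / √t) ≤ log (t / p) := by
    have h := one_sub_inv_le_log_of_pos (div_pos (sqrt_pos.2 ht) (sqrt_pos.2 hp))
    rw [inv_div, log_div (sqrt_pos.2 ht).ne' (sqrt_pos.2 hp).ne', log_sqrt ht.le,
      log_sqrt hp.le] at h
    rw [log_div ht.ne' hp.ne']
    linarith
  have hmul := mul_le_mul_of_nonneg_left hlog ht.le
  have hst : t * (√p / √t) = √t * √p := by
    field_simp
    rw [sq_sqrt ht.le]
  nlinarith [sq_sqrt ht.le, sq_sqrt hp.le]

lemma sum_sq_sqrt_sub_sqrt_le_klDivReal (hT : IsProbDist T) (hP : IsProbDist P)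
    (hTP : ∀ i, P i = 0 → T i = 0) :
    ∑ i, (√(T i) - √(P i)) ^ 2 ≤ log 2 * klDivReal T P := by
  have hterm : ∀ i, (√(T i) - √(P i)) ^ 2 ≤ T i * log (T i / P i) - T i + P i := by
    intro i
    rcases (hP.1 i).eq_or_lt with hPi | hPi
    · simp [← hPi, hTP i hPi.symm]
    · exact sq_sqrt_sub_sqrt_le_mul_log (hT.1 i) hPi
  calc ∑ i, (√(T i) - √(P i)) ^ 2 ≤ ∑ i, (T i * log (T i / P i) - T i + P i) :=
        Finset.sum_le_sum fun i _ => hterm i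
    _ = log 2 * klDivReal T P := by
        rw [Finset.sum_add_distrib, Finset.sum_sub_distrib, hT.2, hP.2, klDivReal_eq_sum,
          Finset.mul_sum]
        simp only [logb, sub_add_cancel]
        exact Finset.sum_congr rfl fun i _ => by field_simp

lemma klDivReal_nonneg (hT : IsProbDist T) (hP : IsProbDist P)
    (hTP : ∀ i, P i = 0 → T i = 0) : 0 ≤ klDivReal T P :=
  nonneg_of_mul_nonneg_right
    ((Finset.sum_nonneg fun _ _ => sq_nonneg _).trans
      (sum_sq_sqrt_sub_sqrt_le_klDivReal hT hP hTP))
    (log_pos one_lt_two)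

lemma abs_sub_le_of_klDivReal_le (hT : IsProbDist T) (hP : IsProbDist P)
    (hTP : ∀ i, P i = 0 → T i = 0) {c : ℝ} (hc : klDivReal T P ≤ c) (i : Fin d) :
    |T i - P i| ≤ 2 * √(log 2 * c) := by
  have hsq : (√(T i) - √(P i)) ^ 2 ≤ log 2 * c :=
    (Finset.single_le_sum (f := fun i => (√(T i) - √(P i)) ^ 2) (fun _ _ => sq_nonneg _)
      (mem_univ i)).trans <| (sum_sq_sqrt_sub_sqrt_le_klDivReal hT hP hTP).trans <|
        mul_le_mul_of_nonneg_left hc (log_pos one_lt_two).le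
  have hsum : √(T i) + √(P i) ≤ 2 := by
    have := sqrt_le_one.2 (hT.le_one i)
    have := sqrt_le_one.2 (hP.le_one i)
    linarith
  calc |T i - P i| = |√(T i) - √(P i)| * (√(T i) + √(P i)) := by
        rw [← abs_of_nonneg (by positivity : 0 ≤ √(T i) + √(P i)), ← abs_mul]
        congr 1
        linear_combination -sq_sqrt (hT.1 i) + sq_sqrt (hP.1 i)
    _ ≤ √(log 2 * c) * 2 :=
        mul_le_mul (abs_le_sqrt hsq) hsum (by positivity) (sqrt_nonneg _)
    _ = 2 * √(log 2 * c) := mul_comm _ _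

lemma klDivReal_eq_klDivReal_add_sum (hTP : ∀ i, P i = 0 → T i = 0)
    (hPQ : ∀ i, Q i = 0 → P i = 0) :
    klDivReal T Q = klDivReal T P + ∑ i, T i * logb 2 (P i / Q i) := by
  simp only [klDivReal_eq_sum, ← Finset.sum_add_distrib, ← mul_add]
  refine Finset.sum_congr rfl fun i _ => ?_
  by_cases hTi : T i = 0
  · simp [hTi]
  have hPi : P i ≠ 0 := fun h => hTi (hTP i h)
  have hQi : Q i ≠ 0 := fun h => hPi (hPQ i h)
  rw [← logb_mul (div_ne_zero hTi hPi) (div_ne_zero hPi hQi), div_mul_div_cancel₀ hPi]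

lemma klDivReal_sub_le_of_klDivReal_le (hT : IsProbDist T) (hP : IsProbDist P)
    (hTP : ∀ i, P i = 0 → T i = 0) (hPQ : ∀ i, Q i = 0 → P i = 0)
    {c : ℝ} (hc : klDivReal T P ≤ c) :
    klDivReal P Q - (∑ i, |logb 2 (P i / Q i)|) * (2 * √(log 2 * c)) ≤ klDivReal T Q := by
  have hlin : ∑ i, P i * logb 2 (P i / Q i) - (∑ i, |logb 2 (P i / Q i)|) * (2 * √(log 2 * c))
      ≤ ∑ i, T i * logb 2 (P i / Q i) := by
    rw [sub_le_iff_le_add', ← sub_le_iff_le_add, ← Finset.sum_sub_distrib, Finset.sum_mul]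
    refine Finset.sum_le_sum fun i _ => ?_
    rw [← sub_mul]
    refine (le_abs_self _).trans ?_
    rw [abs_mul, mul_comm]
    exact mul_le_mul_of_nonneg_left (abs_sub_comm (P i) (T i) ▸
      abs_sub_le_of_klDivReal_le hT hP hTP hc i) (abs_nonneg _)
  rw [klDivReal_eq_klDivReal_add_sum hTP hPQ, klDivReal_eq_sum P Q]
  linarith [klDivReal_nonneg hT hP hTP]

end KL

section Types

variable {d n : ℕ}

lemma sum_comp_eq_mul_sum_empDist (x : Fin n → Fin d) (f : Fin d → ℝ) :
    ∑ j, f (x j) = n * ∑ i, empDist x i * f i := by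
  rcases n.eq_zero_or_pos with rfl | hn
  · simp
  rw [← Finset.sum_fiberwise' univ x f, Finset.mul_sum]
  refine Finset.sum_congr rfl fun i _ => ?_
  rw [Finset.sum_const, nsmul_eq_mul, empDist]
  field_simp

lemma empDist_isProbDist (hn : 0 < n) (x : Fin n → Fin d) : IsProbDist (empDist x) := by
  refine ⟨fun i => by unfold empDist; positivity, ?_⟩
  have h := sum_comp_eq_mul_sum_empDist x fun _ => 1
  simp only [mul_one, Finset.sum_const, Finset.card_univ, Fintype.card_fin, nsmul_eq_mul] at h
  exact (mul_right_eq_self₀.1 h.symm).resolve_right (by positivity)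

lemma empDist_apply_pos (x : Fin n → Fin d) (j : Fin n) : 0 < empDist x (x j) := by
  have : 0 < n := j.pos
  unfold empDist
  exact div_pos (Nat.cast_pos.2 (Finset.card_pos.2 ⟨j, by simp⟩)) (by positivity)

lemma prod_eq_prod_empDist_mul_rpow (x : Fin n → Fin d) (Q : Fin d → ℝ)
    (hQ : ∀ j, 0 < Q (x j)) :
    ∏ j, Q (x j) = (∏ j, empDist x (x j)) * 2 ^ (-(n : ℝ) * klDivReal (empDist x) Q) := by
  have hexp : (n : ℝ) * klDivReal (empDist x) Q = ∑ j, logb 2 (empDist x (x j) / Q (x j)) := by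
    rw [klDivReal_eq_sum, sum_comp_eq_mul_sum_empDist x fun i => logb 2 (empDist x i / Q i)]
  rw [neg_mul, hexp, ← Finset.sum_neg_distrib, rpow_sum_of_pos two_pos,
    ← Finset.prod_mul_distrib]
  refine Finset.prod_congr rfl fun j _ => ?_
  have hT := empDist_apply_pos x j
  rw [rpow_neg two_pos.le, rpow_logb two_pos (by norm_num) (div_pos hT (hQ j)), inv_div]
  field_simp

lemma prod_le_prod_empDist_mul_rpow (x : Fin n → Fin d) {Q : Fin d → ℝ} (hQ : ∀ i, 0 ≤ Q i) :
    ∏ j, Q (x j) ≤ (∏ j, empDist x (x j)) * 2 ^ (-(n : ℝ) * klDivReal (empDist x) Q) := by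
  by_cases h : ∀ j, 0 < Q (x j)
  · exact (prod_eq_prod_empDist_mul_rpow x Q h).le
  push Not at h
  obtain ⟨j, hj⟩ := h
  rw [Finset.prod_eq_zero (mem_univ j) (le_antisymm hj (hQ _))]
  exact mul_nonneg (Finset.prod_nonneg fun j _ => (empDist_apply_pos x j).le) (by positivity)

lemma card_image_empDist_le :
    (univ.image (empDist : (Fin n → Fin d) → Fin d → ℝ)).card ≤ (n + 1) ^ d := by
  classical
  let count (x : Fin n → Fin d) (i : Fin d) : Fin (n + 1) :=
    ⟨#{j | x j = i}, Nat.lt_succ_of_le ((Finset.card_filter_le _ _).trans (by simp))⟩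
  have hfac : (empDist : (Fin n → Fin d) → Fin d → ℝ) =
      (fun k i => ((k i : ℕ) : ℝ) / n) ∘ count := rfl
  calc (univ.image (empDist : (Fin n → Fin d) → Fin d → ℝ)).card
      = ((univ.image count).image fun k i => ((k i : ℕ) : ℝ) / n).card := by
        rw [hfac, Finset.image_image]
    _ ≤ (univ : Finset (Fin d → Fin (n + 1))).card :=
        Finset.card_image_le.trans (Finset.card_le_univ _)
    _ = (n + 1) ^ d := by simp

lemma sum_prod_empDist_le :
    ∑ x : Fin n → Fin d, ∏ j, empDist x (x j) ≤ ((n : ℝ) + 1) ^ d := by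
  classical
  rcases n.eq_zero_or_pos with rfl | hn
  · simp
  rw [← Finset.sum_fiberwise_of_maps_to (fun x _ => Finset.mem_image_of_mem empDist (mem_univ x))]
  have hfiber : ∀ T ∈ univ.image (empDist : (Fin n → Fin d) → Fin d → ℝ),
      ∑ x : Fin n → Fin d with empDist x = T, ∏ j, empDist x (x j) ≤ 1 := by
    intro T hT
    obtain ⟨x₀, -, rfl⟩ := Finset.mem_image.1 hT
    calc ∑ x : Fin n → Fin d with empDist x = empDist x₀, ∏ j, empDist x (x j)
        = ∑ x : Fin n → Fin d with empDist x = empDist x₀, ∏ j, empDist x₀ (x j) :=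
          Finset.sum_congr rfl fun x hx => by rw [(Finset.mem_filter.1 hx).2]
      _ ≤ ∑ x : Fin n → Fin d, ∏ j, empDist x₀ (x j) :=
          Finset.sum_le_sum_of_subset_of_nonneg (Finset.filter_subset _ _)
            fun x _ _ => Finset.prod_nonneg fun j _ => (empDist_isProbDist hn x₀).1 _
      _ = 1 := by rw [← Fintype.sum_pow, (empDist_isProbDist hn x₀).2, one_pow]
  calc _ ≤ ∑ _T ∈ univ.image (empDist : (Fin n → Fin d) → Fin d → ℝ), (1 : ℝ) :=
        Finset.sum_le_sum hfiber
    _ ≤ ((n : ℝ) + 1) ^ d := by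
        rw [Finset.sum_const, nsmul_one]
        exact_mod_cast card_image_empDist_le

/-- The upper half of Sanov's theorem. -/
lemma sum_prod_le_of_le_klDivReal {Q : Fin d → ℝ} (hQ : ∀ i, 0 ≤ Q i)
    (F : Finset (Fin n → Fin d)) {a : ℝ} (ha : ∀ x ∈ F, a ≤ klDivReal (empDist x) Q) :
    ∑ x ∈ F, ∏ j, Q (x j) ≤ ((n : ℝ) + 1) ^ d * 2 ^ (-(n : ℝ) * a) := by
  calc ∑ x ∈ F, ∏ j, Q (x j)
      ≤ ∑ x ∈ F, (∏ j, empDist x (x j)) * 2 ^ (-(n : ℝ) * a) := by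
        refine Finset.sum_le_sum fun x hx => (prod_le_prod_empDist_mul_rpow x hQ).trans ?_
        refine mul_le_mul_of_nonneg_left ?_
          (Finset.prod_nonneg fun j _ => (empDist_apply_pos x j).le)
        exact rpow_le_rpow_of_exponent_le one_le_two
          (mul_le_mul_of_nonpos_left (ha x hx) (by simp))
    _ ≤ ∑ x : Fin n → Fin d, (∏ j, empDist x (x j)) * 2 ^ (-(n : ℝ) * a) :=
        Finset.sum_le_sum_of_subset_of_nonneg (Finset.subset_univ _) fun x _ _ =>
          mul_nonneg (Finset.prod_nonneg fun j _ => (empDist_apply_pos x j).le) (by positivity)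
    _ ≤ ((n : ℝ) + 1) ^ d * 2 ^ (-(n : ℝ) * a) := by
        rw [← Finset.sum_mul]
        exact mul_le_mul_of_nonneg_right sum_prod_empDist_le (by positivity)

end Types

lemma discMeasure_singleton {d : ℕ} (p : Fin d → ℝ) (i : Fin d) :
    discMeasure p {i} = ENNReal.ofReal (p i) := by
  rw [discMeasure, withDensity_apply _ (measurableSet_singleton i), lintegral_singleton,
    Measure.count_singleton, mul_one]

lemma iidMeasure_finset {d n : ℕ} {p : Fin d → ℝ} (hp : ∀ i, 0 ≤ p i)
    (F : Finset (Fin n → Fin d)) :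
    iidMeasure p n F = ENNReal.ofReal (∑ x ∈ F, ∏ j, p (x j)) := by
  rw [← sum_measure_singleton, ENNReal.ofReal_sum_of_nonneg
    fun x _ => Finset.prod_nonneg fun j _ => hp (x j)]
  refine Finset.sum_congr rfl fun x _ => ?_
  rw [iidMeasure, Measure.pi_singleton, ENNReal.ofReal_prod_of_nonneg fun j _ => hp (x j)]
  simp only [discMeasure_singleton]

lemma coe_le_neg_div_mul_log_of_le_rpow {m b : ℝ} (hm : 0 < m) {β : ℝ≥0∞}
    (hβ : β ≤ ENNReal.ofReal (2 ^ (-m * b))) :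
    (b : EReal) ≤ ((-1 / (m * log 2) : ℝ) : EReal) * ENNReal.log β := by
  calc (b : EReal) = ((-1 / (m * log 2) * log (2 ^ (-m * b)) : ℝ) : EReal) := by
        rw [log_rpow two_pos]
        congr 1
        field_simp
    _ = ((-1 / (m * log 2) : ℝ) : EReal) * ENNReal.log (ENNReal.ofReal (2 ^ (-m * b))) := by
        rw [ENNReal.log_ofReal_of_pos (by positivity), EReal.coe_mul]
    _ ≤ ((-1 / (m * log 2) : ℝ) : EReal) * ENNReal.log β := by
        rw [mul_comm, mul_comm _ (ENNReal.log β)]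
        refine EReal.mul_le_mul_of_nonpos_right (ENNReal.log_le_log hβ) ?_
        exact EReal.coe_nonpos.2 (div_nonpos_of_nonpos_of_nonneg (by norm_num) (by positivity))

lemma tendsto_logb_natCast_add_one_div :
    Tendsto (fun n : ℕ => logb 2 (n + 1) / n) atTop (𝓝 0) := by
  have h := (tendsto_pow_logb_div_mul_add_atTop (b := 2) 1 (-1) 1 one_ne_zero).comp
    (tendsto_atTop_add_const_right _ 1 tendsto_natCast_atTop_atTop)
  refine h.congr fun n => ?_
  simp

lemma klDiv_le_coe_iff {d : ℕ} {p q : Fin d → ℝ} {c : ℝ} :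
    klDiv p q ≤ (c : EReal) ↔ (∀ i, q i = 0 → p i = 0) ∧ klDivReal p q ≤ c := by
  by_cases h : ∀ i, q i = 0 → p i = 0
  · rw [klDiv, if_pos h, EReal.coe_le_coe_iff]
    exact (and_iff_right h).symm
  · simp [klDiv, h]

lemma iidMeasure_klDiv_empDist_le {d n : ℕ} {P Q : Fin d → ℝ} (hP : IsProbDist P)
    (hQ : IsProbDist Q) (hPQ : ∀ i, Q i = 0 → P i = 0) (hn : 0 < n) (c : ℝ) :
    iidMeasure Q n {x | klDiv (empDist x) P ≤ (c : EReal)} ≤ ENNReal.ofReal (2 ^ (-(n : ℝ) *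
      (klDivReal P Q - (∑ i, |logb 2 (P i / Q i)|) * (2 * √(log 2 * c)) -
        d * logb 2 (n + 1) / n))) := by
  set a := klDivReal P Q - (∑ i, |logb 2 (P i / Q i)|) * (2 * √(log 2 * c))
  have hsanov : ∑ x : Fin n → Fin d with klDiv (empDist x) P ≤ (c : EReal), ∏ j, Q (x j) ≤
      ((n : ℝ) + 1) ^ d * 2 ^ (-(n : ℝ) * a) := by
    refine sum_prod_le_of_le_klDivReal hQ.1 _ fun x hx => ?_
    obtain ⟨hsupp, hkl⟩ := klDiv_le_coe_iff.1 (Finset.mem_filter.1 hx).2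
    exact klDivReal_sub_le_of_klDivReal_le (empDist_isProbDist hn x) hP hsupp hPQ hkl
  have hpow : ((n : ℝ) + 1) ^ d * 2 ^ (-(n : ℝ) * a) =
      2 ^ (-(n : ℝ) * (a - d * logb 2 (n + 1) / n)) := by
    have hn0 : (n : ℝ) ≠ 0 := Nat.cast_ne_zero.2 hn.ne'
    rw [show -(n : ℝ) * (a - d * logb 2 (n + 1) / n) = logb 2 (n + 1) * d + -(n : ℝ) * a by
      field_simp; ring, rpow_add two_pos, rpow_mul two_pos.le (logb 2 _),
      rpow_logb two_pos (by norm_num) (by positivity), rpow_natCast]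
  rw [← Finset.coe_filter_univ, iidMeasure_finset hQ.1, ← hpow]
  exact ENNReal.ofReal_le_ofReal hsanov

theorem hoeffding_typeII_exponent_general {d : ℕ} (P Q : Fin d → ℝ)
    (hP : IsProbDist P) (hQ : IsProbDist Q)
    (hPQ : ∀ i, Q i = 0 → P i = 0)
    (C : ℝ) (c : ℕ → ℝ)
    (hc : ∀ n : ℕ, c n = d * Real.logb 2 (n + 1) / n + C / n) :
    ((klDivReal P Q : ℝ) : EReal) ≤
      Filter.atTop.liminf (fun n : ℕ =>
        (((-1 : ℝ) / (n * Real.log 2) : ℝ) : EReal) *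
          ENNReal.log (iidMeasure Q n {x | klDiv (empDist x) P ≤ ((c n : ℝ) : EReal)})) := by
  set b : ℕ → ℝ := fun n => klDivReal P Q - (∑ i, |logb 2 (P i / Q i)|) *
    (2 * √(log 2 * c n)) - d * logb 2 (n + 1) / n
  have hc0 : Tendsto c atTop (𝓝 0) := by
    simpa [funext hc, mul_div_assoc] using
      (tendsto_logb_natCast_add_one_div.const_mul (d : ℝ)).add
        (tendsto_const_div_atTop_nhds_zero_nat C)
  have hb : Tendsto b atTop (𝓝 (klDivReal P Q)) := by
    have hsqrt := (continuous_sqrt.tendsto 0).comp (by simpa using hc0.const_mul (log 2))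
    simpa [b, mul_div_assoc] using ((tendsto_const_nhds (x := klDivReal P Q)).sub
      ((hsqrt.const_mul 2).const_mul _)).sub
        (tendsto_logb_natCast_add_one_div.const_mul (d : ℝ))
  calc ((klDivReal P Q : ℝ) : EReal) = atTop.liminf fun n => ((b n : ℝ) : EReal) :=
        ((EReal.tendsto_coe.2 hb).liminf_eq).symm
    _ ≤ _ := liminf_le_liminf <| (eventually_gt_atTop 0).mono fun n hn =>
        coe_le_neg_div_mul_log_of_le_rpow (Nat.cast_pos.2 hn)
          (iidMeasure_klDiv_empDist_le hP hQ hPQ hn (c n))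

/-- the type II error exponent of Hoeffding's test is at least
`D(P‖Q)`: `liminf -(1/n) log₂ βₙ ≥ D(P‖Q)`, where `βₙ = Pr[D(Q̂ₙ‖P) ≤ cₙ]`
under `Xⁿ` i.i.d. from `Q`.  (`-(1/n) log₂ β = (-(1/(n ln 2))) · ln β`, with
`ENNReal.log` the natural log taking value `⊥` at `0`.) -/
theorem hoeffding_typeII_exponent {d : ℕ} (P Q : Fin d → ℝ)
    (hP : IsProbDist P) (hQ : IsProbDist Q) (hne : P ≠ Q)
    (hPQ : ∀ i, Q i = 0 → P i = 0)
    (C : ℝ) (hC : 0 < C) (c : ℕ → ℝ)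
    (hc : ∀ n : ℕ, c n = d * Real.logb 2 (n + 1) / n + C / n) :
    ((klDivReal P Q : ℝ) : EReal) ≤
      Filter.atTop.liminf (fun n : ℕ =>
        (((-1 : ℝ) / (n * Real.log 2) : ℝ) : EReal) *
          ENNReal.log (iidMeasure Q n {x | klDiv (empDist x) P ≤ ((c n : ℝ) : EReal)})) :=
  hoeffding_typeII_exponent_general P Q hP hQ hPQ C c hc
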